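/- arXiv:2601.22137 — 7 statements merged into one kernel-verified Lean document; each statement's English description precedes it below -/
import Mathlib

section
/- For all x in [1/2, 1] and all α in [1/2, 1], the value h(x,α) = 1 - (1-x)(1+αx)² satisfies -1/5 ≤ h(x,α) ≤ x². -/
theorem h_bounds_large_x (x α : ℝ) (hx : x ∈ Set.Icc (1/2 : ℝ) 1)
    (hα : α ∈ Set.Icc (1/2 : ℝ) 1) :
    -1/5 ≤ 1 - (1 - x) * (1 + α * x)^2 ∧ 1 - (1 - x) * (1 + α * x)^2 ≤ x^2 := by
  obtain ⟨hx1, hx2⟩ := hx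
  obtain ⟨ha1, ha2⟩ := hα
  have hx0 : (0:ℝ) ≤ x := by linarith
  have h2 : 0 ≤ (1 + α * x)^2 - (1 + x) := by
    nlinarith [mul_nonneg (by linarith : (0:ℝ) ≤ α - 1/2) hx0, sq_nonneg x, sq_nonneg (α*x)]
  have h3 : 0 ≤ (1 - x) * ((1 + α * x)^2 - (1 + x)) :=
    mul_nonneg (by linarith) h2
  constructor
  · nlinarith [sq_nonneg (α*x - 1), mul_nonneg (mul_nonneg (by linarith : (0:ℝ) ≤ 1 - x) (by linarith : (0:ℝ) ≤ α - 1/2)) hx0, sq_nonneg (x - 1/2), sq_nonneg (1 + α*x), mul_nonneg (by linarith : (0:ℝ) ≤ 1 - α) (by linarith : (0:ℝ) ≤ 1 - x)]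
  · nlinarith [h3]
end

section
/- For all x in [-1/5, 1/2] and all α in [1/2, 1], the value h(x,α) = 1 - (1-x)(1+αx)² satisfies -1/5 ≤ h(x,α) ≤ 1/4. -/
theorem h_bounds_small_x (x α : ℝ) (hx : x ∈ Set.Icc (-1/5 : ℝ) (1/2))
    (hα : α ∈ Set.Icc (1/2 : ℝ) 1) :
    -1/5 ≤ 1 - (1 - x) * (1 + α * x)^2 ∧ 1 - (1 - x) * (1 + α * x)^2 ≤ 1/4 := by
  obtain ⟨hx1, hx2⟩ := hx
  obtain ⟨ha1, ha2⟩ := hα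
  rcases le_or_gt 0 x with hx0 | hx0
  · constructor
    · -- (1+αx)^2 ≤ (1+x)^2, then (1-x)(1+x)^2 ≤ 6/5
      have h1 : (1 + α*x)^2 ≤ (1+x)^2 := by nlinarith [mul_nonneg (mul_nonneg (sub_nonneg.2 ha2) hx0) (by nlinarith [mul_nonneg (by linarith : (0:ℝ) ≤ α) hx0] : (0:ℝ) ≤ 2 + x + α*x)]
      have h2 : (1-x)*(1+x)^2 ≤ 6/5 := by nlinarith [sq_nonneg (x - 1/3)]
      nlinarith [mul_le_mul_of_nonneg_left h1 (by linarith : (0:ℝ) ≤ 1 - x)]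
    · have h1 : (1 + x/2)^2 ≤ (1 + α*x)^2 := by nlinarith [mul_nonneg (by linarith : (0:ℝ) ≤ α - 1/2) hx0]
      have h2 : (3:ℝ)/4 ≤ (1-x)*(1+x/2)^2 := by nlinarith [sq_nonneg (x - 1/2), mul_nonneg hx0 (by linarith : (0:ℝ) ≤ 1/2 - x)]
      nlinarith [mul_le_mul_of_nonneg_left h1 (by linarith : (0:ℝ) ≤ 1 - x)]
  · constructor
    · have h1 : (1 + α*x)^2 ≤ (1 + x/2)^2 := by nlinarith [mul_nonneg (mul_nonneg (by linarith : (0:ℝ) ≤ α - 1/2) (by linarith : (0:ℝ) ≤ -x)) (by nlinarith [mul_nonneg (by linarith : (0:ℝ) ≤ 1 - α) (by linarith : (0:ℝ) ≤ -x)] : (0:ℝ) ≤ 2 + x/2 + α*x)]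
      have h2 : (1-x)*(1+x/2)^2 ≤ 6/5 := by nlinarith [mul_nonneg (by linarith : (0:ℝ) ≤ -x) (by linarith : (0:ℝ) ≤ x + 1/5)]
      nlinarith [mul_le_mul_of_nonneg_left h1 (by linarith : (0:ℝ) ≤ 1 - x)]
    · have h1 : (1 + x)^2 ≤ (1 + α*x)^2 := by nlinarith [mul_nonneg (sub_nonneg.2 ha2) (by linarith : (0:ℝ) ≤ -x)]
      have h2 : (3:ℝ)/4 ≤ (1-x)*(1+x)^2 := by nlinarith [mul_nonneg (by linarith : (0:ℝ) ≤ -x) (by linarith : (0:ℝ) ≤ x + 1/5), sq_nonneg (x + 1/5)]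
      nlinarith [mul_le_mul_of_nonneg_left h1 (by linarith : (0:ℝ) ≤ 1 - x)]
end

section
/- For all x in [-1/5, 1/2] and α in [1/2, 1], the product g(x,α) = (1-x)(1+αx)² satisfies 3/4 ≤ g(x,α) ≤ 6/5. -/
theorem g_bounds (x α : ℝ) (hx : x ∈ Set.Icc (-1/5 : ℝ) (1/2))
    (hα : α ∈ Set.Icc (1/2 : ℝ) 1) :
    3/4 ≤ (1 - x) * (1 + α * x)^2 ∧ (1 - x) * (1 + α * x)^2 ≤ 6/5 := by
  obtain ⟨hx1, hx2⟩ := hx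
  obtain ⟨ha1, ha2⟩ := hα
  have ht : (0:ℝ) ≤ α - 1/2 := by linarith
  have ht2 : (0:ℝ) ≤ 1 - α := by linarith
  have hL : (0:ℝ) ≤ 3*α*x + α + 4 := by nlinarith
  constructor
  · nlinarith [sq_nonneg (x + 1/5), sq_nonneg (x - 1/2), mul_nonneg (sub_nonneg.2 hx1) ht,
      mul_nonneg (mul_nonneg (sub_nonneg.2 hx1) (sub_nonneg.2 hx1)) ht,
      mul_nonneg (sub_nonneg.2 hx1) ht2, sq_nonneg ((x+1/5)*(α-1/2)),
      mul_nonneg (mul_nonneg (sub_nonneg.2 hx1) (sub_nonneg.2 hx1)) ht2]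
  · nlinarith [mul_nonneg (sq_nonneg (3*α*x - 2*α + 1)) hL,
      mul_nonneg (mul_nonneg ht ht) ht2, mul_nonneg ht ht2, ht2, ha1]
end

section
/- Let x₁, …, xₙ ∈ [-1/4, 1/4] and let α* be a minimizer over α ∈ [1/2, 1] of ∑ᵢ h(xᵢ, α)², where h(x,α) = 1 - (1-x)(1+αx)². Then max_i |h(xᵢ, α*)| ≤ C · max_i xᵢ² for the constant C = 16(-17/3 + 10/√3) < 1.71. -/
lemma slope_aux (δ S1 S2 S3 S4 : ℝ) (hδ : 0 < δ)
    (h0 : ∀ ε : ℝ, 0 < ε → ε ≤ δ → 0 ≤ ε * S1 + ε^2 * S2 + ε^3 * S3 + ε^4 * S4) :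
    0 ≤ S1 := by
  by_contra hneg
  push_neg at hneg
  set K := |S2| + |S3| + |S4| with hKdef
  have hK : 0 ≤ K := by positivity
  set ε := min δ (min 1 ((-S1)/(4*(K+1)))) with hεdef
  have hε0 : 0 < ε :=
    lt_min hδ (lt_min one_pos (div_pos (by linarith) (by linarith)))
  have hεa : ε ≤ δ := min_le_left _ _
  have hεb : ε ≤ 1 := le_trans (min_le_right _ _) (min_le_left _ _)
  have hεc : ε ≤ (-S1)/(4*(K+1)) := le_trans (min_le_right _ _) (min_le_right _ _)
  have hεc' : ε * (4*(K+1)) ≤ -S1 := by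
    rw [← le_div_iff₀ (by linarith : (0:ℝ) < 4*(K+1))]; exact hεc
  have h1 := h0 ε hε0 hεa
  have uS2 : S2 ≤ K := by
    have := le_abs_self S2; have := abs_nonneg S3; have := abs_nonneg S4; linarith
  have uS3 : S3 ≤ K := by
    have := le_abs_self S3; have := abs_nonneg S2; have := abs_nonneg S4; linarith
  have uS4 : S4 ≤ K := by
    have := le_abs_self S4; have := abs_nonneg S2; have := abs_nonneg S3; linarith
  have u2 : ε^2 * S2 ≤ ε^2 * K := by nlinarith [sq_nonneg ε]
  have u3 : ε^3 * S3 ≤ ε^2 * K := by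
    have a1 : ε^3 * S3 ≤ ε^3 * K := by nlinarith [pow_pos hε0 3]
    have a2 : ε^3 * K ≤ ε^2 * K := by
      nlinarith [mul_nonneg (mul_nonneg (sq_nonneg ε) hK) (by linarith : (0:ℝ) ≤ 1 - ε)]
    linarith
  have u4 : ε^4 * S4 ≤ ε^2 * K := by
    have a1 : ε^4 * S4 ≤ ε^4 * K := by nlinarith [pow_pos hε0 4]
    have a2 : ε^4 * K ≤ ε^2 * K := by
      nlinarith [mul_nonneg (mul_nonneg (sq_nonneg ε) hK)
        (by nlinarith [sq_nonneg ε, hε0] : (0:ℝ) ≤ 1 - ε^2)]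
    linarith
  have hfin : ε * (4*(K+1)) * ε ≤ (-S1) * ε :=
    mul_le_mul_of_nonneg_right hεc' hε0.le
  nlinarith [h1, u2, u3, u4, hfin, mul_pos hε0 (by linarith : (0:ℝ) < -S1)]

lemma factor_pos (α m t : ℝ) (hα1 : 1/2 ≤ α) (hα2 : α ≤ 1)
    (hm : 0 ≤ m) (hm14 : m ≤ 1/4) (ht1 : -m ≤ t) (ht2 : t ≤ m) :
    0 < (1 - t) * (1 + α * t) := by
  have h1 : (0:ℝ) < 1 - t := by linarith
  have h2 : (0:ℝ) < 1 + α * t := by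
    have e1 : α * (-m) ≤ α * t := mul_le_mul_of_nonneg_left ht1 (by linarith)
    have e2 : α * m ≤ 1 * m := mul_le_mul_of_nonneg_right hα2 hm
    nlinarith
  exact mul_pos h1 h2

lemma mid_neg (α m t : ℝ) (hα1 : 1/2 ≤ α) (hα2 : α ≤ 1)
    (ht1 : -m ≤ t) (ht2 : t ≤ m)
    (hB : m * ((2*α - α^2) + α^2 * m) < 2*α - 1) :
    (1 - 2*α) + (2*α - α^2) * t + α^2 * t^2 < 0 := by
  have e1 : (2*α - α^2) * t ≤ (2*α - α^2) * m :=
    mul_le_mul_of_nonneg_left ht2 (by nlinarith)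
  have e2 : α^2 * t^2 ≤ α^2 * m^2 := by
    nlinarith [mul_nonneg (mul_nonneg (sub_nonneg.mpr ht2)
      (by linarith : (0:ℝ) ≤ m + t)) (sq_nonneg α)]
  nlinarith [hB]

lemma term_aux (α m t : ℝ) (hα1 : 1/2 ≤ α) (hα2 : α ≤ 1)
    (hm : 0 ≤ m) (hm14 : m ≤ 1/4) (ht1 : -m ≤ t) (ht2 : t ≤ m)
    (hB : m * ((2*α - α^2) + α^2 * m) < 2*α - 1) :
    4 * (1 - (1 - t) * (1 + α * t)^2) * (t * (1 - t) * (1 + α * t)) ≤ 0 := by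
  have hu := factor_pos α m t hα1 hα2 hm hm14 ht1 ht2
  have hmid := mid_neg α m t hα1 hα2 ht1 ht2 hB
  have hrw : 4 * (1 - (1 - t) * (1 + α * t)^2) * (t * (1 - t) * (1 + α * t)) =
      4 * t^2 * (((1 - 2*α) + (2*α - α^2) * t + α^2 * t^2)) * ((1 - t) * (1 + α * t)) := by
    ring
  rw [hrw]
  nlinarith [sq_nonneg t, mul_pos hu (by linarith :
    (0:ℝ) < -((1 - 2*α) + (2*α - α^2) * t + α^2 * t^2))]

lemma term_aux_strict (α m t : ℝ) (hα1 : 1/2 ≤ α) (hα2 : α ≤ 1)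
    (hm : 0 < m) (hm14 : m ≤ 1/4) (ht1 : -m ≤ t) (ht2 : t ≤ m) (htm : t^2 = m^2)
    (hB : m * ((2*α - α^2) + α^2 * m) < 2*α - 1) :
    4 * (1 - (1 - t) * (1 + α * t)^2) * (t * (1 - t) * (1 + α * t)) < 0 := by
  have hu := factor_pos α m t hα1 hα2 hm.le hm14 ht1 ht2
  have hmid := mid_neg α m t hα1 hα2 ht1 ht2 hB
  have hrw : 4 * (1 - (1 - t) * (1 + α * t)^2) * (t * (1 - t) * (1 + α * t)) =
      4 * t^2 * (((1 - 2*α) + (2*α - α^2) * t + α^2 * t^2)) * ((1 - t) * (1 + α * t)) := by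
    ring
  rw [hrw]
  have h4t : (0:ℝ) < 4 * t^2 := by rw [htm]; nlinarith [mul_pos hm hm]
  have := mul_pos (mul_pos h4t (by linarith :
    (0:ℝ) < -((1 - 2*α) + (2*α - α^2) * t + α^2 * t^2))) hu
  nlinarith [this]

lemma point_aux (α m t : ℝ) (hα1 : 1/2 ≤ α) (hα2 : α ≤ 1)
    (hm : 0 ≤ m) (hm14 : m ≤ 1/4) (ht1 : -m ≤ t) (ht2 : t ≤ m)
    (KL : 2*α - 1 ≤ m * ((2*α - α^2) + α^2 * m)) :
    |1 - (1 - t) * (1 + α * t)^2| ≤ 2*(2*α - α^2) * m^2 := by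
  have hc34 : 3/4 ≤ 2*α - α^2 := by nlinarith
  have hβ0 : 0 ≤ 2*α - 1 := by linarith
  have hαm : α^2 * m ≤ 2*α - α^2 := by nlinarith [sq_nonneg α]
  rw [abs_le]
  constructor
  · rcases le_or_gt 0 t with ht | ht
    · nlinarith [KL, mul_nonneg (sub_nonneg.mpr ht2) hβ0,
        mul_le_mul_of_nonneg_left KL hm,
        mul_le_mul_of_nonneg_left hαm (sq_nonneg m),
        mul_nonneg (by linarith : (0:ℝ) ≤ 2*α - α^2) (sq_nonneg t),
        mul_nonneg (mul_nonneg (sq_nonneg α) (sq_nonneg t)) ht]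
    · nlinarith [mul_nonneg (by linarith : (0:ℝ) ≤ -t) hβ0,
        mul_nonneg (mul_nonneg hm hm) (by linarith : (0:ℝ) ≤ 2*α - α^2),
        mul_nonneg (sq_nonneg t) (by nlinarith [sq_nonneg α] :
          (0:ℝ) ≤ (2*α - α^2) + α^2 * t)]
  · rcases le_or_gt 0 t with ht | ht
    · have p1 : 0 ≤ t * (2*α - 1) := mul_nonneg ht hβ0
      have p2 : (2*α - α^2) * t^2 ≤ (2*α - α^2) * m^2 := by
        nlinarith [mul_nonneg (mul_nonneg (sub_nonneg.mpr ht2)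
          (by linarith : (0:ℝ) ≤ m + t)) (by linarith : (0:ℝ) ≤ 2*α - α^2)]
      have p3 : α^2 * t^3 ≤ α^2 * m^3 := by
        have := pow_le_pow_left₀ ht ht2 3
        nlinarith [sq_nonneg α]
      have p4 : m^2 * (α^2 * m) ≤ m^2 * (2*α - α^2) :=
        mul_le_mul_of_nonneg_left hαm (sq_nonneg m)
      nlinarith [p1, p2, p3, p4]
    · have hbr : 0 ≤ (2*α - α^2) * (m + (-t)) - α^2 * (m^2 + m*(-t) + t^2) := by
        nlinarith [sq_nonneg α, mul_nonneg (mul_nonneg hm hm) (by nlinarith : (0:ℝ) ≤ 1 - α^2),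
          mul_nonneg (by linarith : (0:ℝ) ≤ -t) (by linarith : (0:ℝ) ≤ m + t),
          mul_nonneg hm (by linarith : (0:ℝ) ≤ m + t)]
      nlinarith [KL, mul_nonneg (by linarith : (0:ℝ) ≤ m + t) hbr,
        mul_le_mul_of_nonneg_left KL hm,
        mul_nonneg (by linarith : (0:ℝ) ≤ m + t) hβ0]

set_option maxHeartbeats 1000000 in
theorem optimal_alpha_quadratic_bound (n : ℕ) (hn : 1 ≤ n) (x : Fin n → ℝ)
    (hx : ∀ i, x i ∈ Set.Icc (-1/4 : ℝ) (1/4))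
    (αs : ℝ) (hαs : αs ∈ Set.Icc (1/2 : ℝ) 1)
    (hopt : ∀ α ∈ Set.Icc (1/2 : ℝ) 1,
      ∑ i, (1 - (1 - x i) * (1 + αs * x i)^2)^2 ≤
      ∑ i, (1 - (1 - x i) * (1 + α * x i)^2)^2)
    (M : ℝ) (hM : IsGreatest (Set.range fun i => (x i)^2) M) :
    (∀ j, |1 - (1 - x j) * (1 + αs * x j)^2| ≤ 16 * (-17/3 + 10 / Real.sqrt 3) * M) ∧
    16 * (-17/3 + 10 / Real.sqrt 3) < 1.71 := by
  have hs2 : Real.sqrt 3 ^ 2 = 3 := Real.sq_sqrt (by norm_num)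
  have hs0 : (0:ℝ) < Real.sqrt 3 := Real.sqrt_pos.mpr (by norm_num)
  have hpart2 : 16 * (-17/3 + 10 / Real.sqrt 3) < 1.71 := by
    have hlow : (48000/27713 : ℝ) < Real.sqrt 3 := by nlinarith [hs2, hs0]
    have h10 : 10 / Real.sqrt 3 < 27713/4800 := by
      rw [div_lt_iff₀ hs0]; nlinarith [hlow]
    nlinarith [h10]
  refine ⟨?_, hpart2⟩
  obtain ⟨⟨i₀, hi₀⟩, hub'⟩ := hM
  simp only at hi₀
  have hub : ∀ i, x i ^ 2 ≤ M := fun i => hub' ⟨i, rfl⟩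
  have hα1 : (1/2:ℝ) ≤ αs := hαs.1
  have hα2 : αs ≤ 1 := hαs.2
  -- trivial case M = 0
  rcases eq_or_lt_of_le (hi₀ ▸ sq_nonneg (x i₀) : (0:ℝ) ≤ M) with hM0 | hM0
  · intro j
    have hxj : x j = 0 := by nlinarith [hub j, sq_nonneg (x j)]
    rw [hxj, ← hM0]
    norm_num
  -- main case M > 0
  set m : ℝ := |x i₀| with hm
  have hm2 : m ^ 2 = M := by rw [sq_abs]; exact hi₀
  have hmnn : 0 ≤ m := abs_nonneg _
  have hm0 : 0 < m := by nlinarith [hm2]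
  have hm14 : m ≤ 1/4 := abs_le.mpr ⟨by linarith [(hx i₀).1], (hx i₀).2⟩
  have hxm : ∀ i, -m ≤ x i ∧ x i ≤ m := by
    intro i
    have h1 := hub i
    rw [← hm2] at h1
    constructor <;> nlinarith [hmnn]
  -- Key inequality from optimality
  have KL : 2*αs - 1 ≤ m * ((2*αs - αs^2) + αs^2 * m) := by
    rcases eq_or_lt_of_le hα1 with heq | hlt
    · have h0 : 2*αs - 1 = 0 := by rw [← heq]; ring
      rw [h0]
      have : 0 ≤ (2*αs - αs^2) + αs^2 * m := by nlinarith [sq_nonneg αs]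
      exact mul_nonneg hmnn this
    · have key : ∀ ε : ℝ, ∑ i, (1 - (1 - x i) * (1 + (αs - ε) * x i)^2)^2 =
          (∑ i, (1 - (1 - x i) * (1 + αs * x i)^2)^2)
          + ε * (∑ i, 4 * (1 - (1 - x i) * (1 + αs * x i)^2) *
              (x i * (1 - x i) * (1 + αs * x i)))
          + ε^2 * (∑ i, (-2 * (1 - (1 - x i) * (1 + αs * x i)^2) * ((1 - x i) * (x i)^2)
              + (2 * x i * (1 - x i) * (1 + αs * x i))^2))
          + ε^3 * (∑ i, 2 * (2 * x i * (1 - x i) * (1 + αs * x i)) * (-(1 - x i) * (x i)^2))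
          + ε^4 * (∑ i, ((1 - x i) * (x i)^2)^2) := by
        intro ε
        simp only [Finset.mul_sum, ← Finset.sum_add_distrib]
        exact Finset.sum_congr rfl fun i _ => by ring
      have hS1 : 0 ≤ ∑ i, 4 * (1 - (1 - x i) * (1 + αs * x i)^2) *
          (x i * (1 - x i) * (1 + αs * x i)) := by
        refine slope_aux (αs - 1/2) _
          (∑ i, (-2 * (1 - (1 - x i) * (1 + αs * x i)^2) * ((1 - x i) * (x i)^2)
              + (2 * x i * (1 - x i) * (1 + αs * x i))^2))
          (∑ i, 2 * (2 * x i * (1 - x i) * (1 + αs * x i)) * (-(1 - x i) * (x i)^2))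
          (∑ i, ((1 - x i) * (x i)^2)^2) (by linarith) ?_
        intro ε hε1 hε2
        have hmem : αs - ε ∈ Set.Icc (1/2:ℝ) 1 := ⟨by linarith, by linarith⟩
        have h := hopt (αs - ε) hmem
        rw [key ε] at h
        linarith
      by_contra hB
      push_neg at hB
      have hTi : ∀ i, 4 * (1 - (1 - x i) * (1 + αs * x i)^2) *
          (x i * (1 - x i) * (1 + αs * x i)) ≤ 0 := fun i =>
        term_aux αs m (x i) hα1 hα2 hmnn hm14 (hxm i).1 (hxm i).2 hB
      have hT0 : 4 * (1 - (1 - x i₀) * (1 + αs * x i₀)^2) *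
          (x i₀ * (1 - x i₀) * (1 + αs * x i₀)) < 0 :=
        term_aux_strict αs m (x i₀) hα1 hα2 hm0 hm14 (hxm i₀).1 (hxm i₀).2
          (by rw [hm2]; exact hi₀) hB
      have hsplit : (∑ i, 4 * (1 - (1 - x i) * (1 + αs * x i)^2) *
          (x i * (1 - x i) * (1 + αs * x i))) =
          4 * (1 - (1 - x i₀) * (1 + αs * x i₀)^2) *
            (x i₀ * (1 - x i₀) * (1 + αs * x i₀)) +
          ∑ i ∈ Finset.univ.erase i₀, 4 * (1 - (1 - x i) * (1 + αs * x i)^2) *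
            (x i * (1 - x i) * (1 + αs * x i)) :=
        (Finset.add_sum_erase _ _ (Finset.mem_univ i₀)).symm
      have hrest : (∑ i ∈ Finset.univ.erase i₀, 4 * (1 - (1 - x i) * (1 + αs * x i)^2) *
          (x i * (1 - x i) * (1 + αs * x i))) ≤ 0 :=
        Finset.sum_nonpos fun i _ => hTi i
      rw [hsplit] at hS1
      linarith
  -- quadratic bound on αs
  have hquad : 3*αs^2 + 24*αs - 16 ≤ 0 := by
    have h1 : (2*αs - αs^2) * m ≤ (2*αs - αs^2) * (1/4) :=
      mul_le_mul_of_nonneg_left hm14 (by nlinarith)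
    have h2 : αs^2 * m^2 ≤ αs^2 * (1/16) := by
      nlinarith [mul_nonneg (mul_nonneg (sub_nonneg.mpr hm14)
        (by linarith : (0:ℝ) ≤ m + 1/4)) (sq_nonneg αs)]
    nlinarith [KL]
  have hs18 : Real.sqrt 3 < 1.8 := by nlinarith [hs2, hs0]
  have hA : αs ≤ (8 * Real.sqrt 3 - 12)/3 := by
    nlinarith [hquad, hs2, hα1,
      (by nlinarith [hs0] : (0:ℝ) < 3*αs + 8*Real.sqrt 3 + 12)]
  have hc2 : 2*(2*αs - αs^2) ≤ (160 * Real.sqrt 3 - 272)/3 := by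
    have h4 : 0 ≤ (8 * Real.sqrt 3 - 12)/3 - αs := by linarith
    have h5 : 0 ≤ 4 - 2*αs - 2*((8 * Real.sqrt 3 - 12)/3) := by nlinarith [hs18]
    nlinarith [mul_nonneg h4 h5, hs2]
  have hCeq : 16 * (-17/3 + 10 / Real.sqrt 3) = (160 * Real.sqrt 3 - 272)/3 := by
    field_simp
    nlinarith [hs2]
  intro j
  have hbound := point_aux αs m (x j) hα1 hα2 hmnn hm14 (hxm j).1 (hxm j).2 KL
  calc |1 - (1 - x j) * (1 + αs * x j)^2| ≤ 2*(2*αs - αs^2) * m^2 := hbound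
    _ ≤ (160 * Real.sqrt 3 - 272)/3 * m^2 :=
        mul_le_mul_of_nonneg_right hc2 (sq_nonneg m)
    _ = 16 * (-17/3 + 10 / Real.sqrt 3) * M := by rw [hCeq, hm2]
end

section
/- Let x₁, …, xₙ ∈ [-1/4, 1/4] and let α̃ ∈ [1/2, 1] satisfy ∑ᵢ h(xᵢ, α̃)² ≤ (1+γ)∑ᵢ h(xᵢ, α)² for all α ∈ [1/2, 1], where γ < 1.38. Then max_i |h(xᵢ, α̃)| ≤ E · max_i xᵢ² for the constant E = 157/√3 - 84187/960 < 2.95. -/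
set_option maxHeartbeats 2000000

lemma aux_key (x s a : ℝ) (hx1 : -s ≤ x) (hx2 : x ≤ s) (hs0 : 0 ≤ s)
    (hs4 : s ≤ 1/4) (ha1 : 1/2 + s < a) (ha2 : a ≤ 1) :
    (119/50) * (1 - (1-x) * (1 + (1/2 + 3/20*s) * x)^2)^2 + (1/100)*s^2*x^2
      ≤ (1 - (1-x) * (1 + a*x)^2)^2 := by
  have hx4 : x ≤ 1/4 := le_trans hx2 hs4
  have hx4' : -(1/4) ≤ x := by linarith
  have hd1 : s < a - 1/2 := by linarith
  have hd2 : a - 1/2 ≤ 1/2 := by linarith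
  have id1 : 1 - (1-x) * (1 + a*x)^2
      = x^2*(3+x)/4 - (a-1/2)*x*((1-x)*(2+(a+1/2)*x)) := by ring
  have id2 : 1 - (1-x) * (1 + (1/2 + 3/20*s)*x)^2
      = x^2*(3+x)/4 - (3/20*s)*x*((1-x)*(2+(1 + 3/20*s)*x)) := by ring
  rcases le_or_gt x 0 with hx0 | hx0
  · -- x ≤ 0
    have hnx : (0:ℝ) ≤ -x := by linarith
    have hv2 : (2:ℝ) ≤ (1-x)*(2+(a+1/2)*x) := by
      nlinarith [mul_nonneg hnx (show (0:ℝ) ≤ 2-(a+1/2)+(a+1/2)*x by nlinarith)]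
    have hw1 : (0:ℝ) ≤ (1-x)*(2+(1 + 3/20*s)*x) := by nlinarith
    have hw2 : (1-x)*(2+(1 + 3/20*s)*x) ≤ 9/4 := by
      nlinarith [mul_nonneg (mul_nonneg hs0 hnx) (show (0:ℝ) ≤ 1-x by linarith), sq_nonneg x]
    have hq0 : (0:ℝ) ≤ x^2*(3+x)/4 := by nlinarith [sq_nonneg x]
    have hq1 : x^2*(3+x)/4 ≤ (3/4)*(s*(-x)) := by
      nlinarith [mul_le_mul_of_nonneg_right (show -x ≤ s by linarith) hnx, sq_nonneg x]
    have hA : 1 - (1-x) * (1 + (1/2 + 3/20*s)*x)^2 ≤ (87/80)*(s*(-x)) := by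
      rw [id2]
      nlinarith [hq1, mul_le_mul_of_nonneg_left hw2 (mul_nonneg hs0 hnx)]
    have hA0 : 0 ≤ 1 - (1-x) * (1 + (1/2 + 3/20*s)*x)^2 := by
      rw [id2]
      nlinarith [hq0, mul_nonneg (mul_nonneg hs0 hnx) hw1]
    have hB : 2*(s*(-x)) ≤ 1 - (1-x) * (1 + a*x)^2 := by
      rw [id1]
      nlinarith [hq0, mul_nonneg (mul_nonneg (show (0:ℝ) ≤ (a-1/2)-s by linarith) hnx)
          (show (0:ℝ) ≤ (1-x)*(2+(a+1/2)*x) by linarith),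
        mul_nonneg (mul_nonneg hs0 hnx) (show (0:ℝ) ≤ (1-x)*(2+(a+1/2)*x) - 2 by linarith)]
    have hBnn : 0 ≤ 2*(s*(-x)) := by positivity
    have h1 : (1 - (1-x) * (1 + (1/2 + 3/20*s)*x)^2)^2 ≤ ((87/80)*(s*(-x)))^2 :=
      pow_le_pow_left₀ hA0 hA 2
    have h2 : (2*(s*(-x)))^2 ≤ (1 - (1-x) * (1 + a*x)^2)^2 := pow_le_pow_left₀ hBnn hB 2
    nlinarith [h1, h2, sq_nonneg (s*x)]
  · -- 0 < x
    have hx0' : (0:ℝ) ≤ x := le_of_lt hx0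
    have hv : (27/16:ℝ) ≤ (1-x)*(2+(a+1/2)*x) := by
      nlinarith [mul_nonneg hx0' (show (0:ℝ) ≤ 5/4 - (2-(a+1/2)+(a+1/2)*x) by nlinarith)]
    have hw1 : (1-x)*(2+(1 + 3/20*s)*x) ≤ 2 := by
      nlinarith [mul_nonneg (mul_nonneg hs0 hx0') (show (0:ℝ) ≤ 1-x by linarith), sq_nonneg x]
    have hw2 : 2 - x - x^2 ≤ (1-x)*(2+(1 + 3/20*s)*x) := by
      nlinarith [mul_nonneg (mul_nonneg hs0 hx0') (show (0:ℝ) ≤ 1-x by linarith)]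
    have hq1 : x^2*(3+x)/4 ≤ (13/16)*(s*x) := by
      nlinarith [mul_le_mul_of_nonneg_right hx2 hx0', sq_nonneg x]
    have hB : 1 - (1-x)*(1+a*x)^2 ≤ -((7/8)*(s*x)) := by
      rw [id1]
      nlinarith [hq1, mul_nonneg (mul_nonneg (show (0:ℝ) ≤ (a-1/2)-s by linarith) hx0')
          (show (0:ℝ) ≤ (1-x)*(2+(a+1/2)*x) by linarith),
        mul_nonneg (mul_nonneg hs0 hx0') (show (0:ℝ) ≤ (1-x)*(2+(a+1/2)*x) - 27/16 by linarith)]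
    have hA1 : 1 - (1-x)*(1+(1/2 + 3/20*s)*x)^2 ≤ (14/25)*(s*x) := by
      rw [id2]
      nlinarith [mul_le_mul_of_nonneg_right hx2 hx0',
        mul_le_mul_of_nonneg_left hw2 (mul_nonneg hs0 hx0'),
        mul_nonneg (mul_nonneg hs0 hs0) (show (0:ℝ) ≤ 1/4 - s by linarith),
        mul_nonneg (mul_nonneg hs0 hx0') (show (0:ℝ) ≤ s - x by linarith),
        mul_nonneg hs0 hx0', sq_nonneg (s - x), sq_nonneg (s + x)]
    have hA2 : -((14/25)*(s*x)) ≤ 1 - (1-x)*(1+(1/2 + 3/20*s)*x)^2 := by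
      rw [id2]
      nlinarith [sq_nonneg x, mul_le_mul_of_nonneg_left hw1 (mul_nonneg hs0 hx0'),
        mul_nonneg hs0 hx0']
    have h1 : (1 - (1-x)*(1+(1/2 + 3/20*s)*x)^2)^2 ≤ ((14/25)*(s*x))^2 := sq_le_sq' hA2 hA1
    have h2 : ((7/8)*(s*x))^2 ≤ (1 - (1-x)*(1+a*x)^2)^2 := by
      have h0 : (0:ℝ) ≤ (7/8)*(s*x) := by positivity
      have h3 := pow_le_pow_left₀ h0 (show (7/8)*(s*x) ≤ -(1 - (1-x)*(1+a*x)^2) by linarith) 2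
      nlinarith [h3]
    nlinarith [h1, h2, sq_nonneg (s*x)]

lemma aux_final (x s a : ℝ) (hx1 : -s ≤ x) (hx2 : x ≤ s) (hs0 : 0 ≤ s)
    (hs4 : s ≤ 1/4) (ha1 : 1/2 ≤ a) (ha2 : a - 1/2 ≤ s) :
    |1 - (1-x) * (1 + a*x)^2| ≤ (29/10)*s^2 := by
  have id1 : 1 - (1-x) * (1 + a*x)^2
      = x^2*(3+x)/4 - (a-1/2)*x*((1-x)*(2+(a+1/2)*x)) := by ring
  have hx4 : x ≤ 1/4 := le_trans hx2 hs4
  have hx4' : -(1/4) ≤ x := by linarith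
  have hd0 : (0:ℝ) ≤ a - 1/2 := by linarith
  rw [abs_le, id1]
  constructor
  · rcases le_or_gt x 0 with hx0 | hx0
    · have hnx : (0:ℝ) ≤ -x := by linarith
      have hv0 : (0:ℝ) ≤ (1-x)*(2+(a+1/2)*x) := by nlinarith
      nlinarith [sq_nonneg x, sq_nonneg s, mul_nonneg (mul_nonneg hd0 hnx) hv0]
    · have hx0' : (0:ℝ) ≤ x := le_of_lt hx0
      have hv2 : (1-x)*(2+(a+1/2)*x) ≤ 2 := by
        nlinarith [mul_nonneg (mul_nonneg hd0 hx0') (show (0:ℝ) ≤ 1-x by linarith), sq_nonneg x]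
      have hv0 : (0:ℝ) ≤ (1-x)*(2+(a+1/2)*x) := by nlinarith
      have h5 : (a-1/2)*x*((1-x)*(2+(a+1/2)*x)) ≤ s*s*2 := by
        have h6 : (a-1/2)*x ≤ s*s := by nlinarith
        have h7 : (0:ℝ) ≤ (a-1/2)*x := mul_nonneg hd0 hx0'
        nlinarith [mul_le_mul h6 hv2 hv0 (mul_nonneg hs0 hs0)]
      nlinarith [sq_nonneg x, sq_nonneg s]
  · rcases le_or_gt x 0 with hx0 | hx0
    · have hnx : (0:ℝ) ≤ -x := by linarith
      nlinarith [mul_nonneg (mul_nonneg hd0 hnx) (show (0:ℝ) ≤ 1-x by linarith),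
        mul_nonneg (mul_nonneg (show (0:ℝ) ≤ s-(a-1/2) by linarith) hnx)
          (show (0:ℝ) ≤ (1-x)*(2+(a+1/2)*x) by nlinarith),
        mul_nonneg (mul_nonneg hs0 (show (0:ℝ) ≤ s+x by linarith))
          (show (0:ℝ) ≤ 1-x by linarith),
        sq_nonneg (s+x), sq_nonneg (s-(a-1/2)), mul_nonneg hs0 hnx,
        mul_nonneg (mul_nonneg hs0 hnx) (show (0:ℝ) ≤ 1/4 - s by linarith),
        mul_nonneg (mul_nonneg hnx hnx) (show (0:ℝ) ≤ 1/4 - s by linarith)]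
    · have hx0' : (0:ℝ) ≤ x := le_of_lt hx0
      have hv0 : (0:ℝ) ≤ (1-x)*(2+(a+1/2)*x) := by nlinarith
      nlinarith [mul_nonneg (mul_nonneg hd0 hx0') hv0, sq_nonneg x,
        mul_le_mul_of_nonneg_right hx2 hx0', sq_nonneg s]

theorem approx_alpha_quadratic_bound (n : ℕ) (hn : 1 ≤ n) (x : Fin n → ℝ)
    (hx : ∀ i, x i ∈ Set.Icc (-1/4 : ℝ) (1/4))
    (αt : ℝ) (hαt : αt ∈ Set.Icc (1/2 : ℝ) 1) (γ : ℝ) (hγ : γ < 1.38)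
    (happrox : ∀ α ∈ Set.Icc (1/2 : ℝ) 1,
      ∑ i, (1 - (1 - x i) * (1 + αt * x i)^2)^2 ≤
      (1 + γ) * ∑ i, (1 - (1 - x i) * (1 + α * x i)^2)^2)
    (M : ℝ) (hM : IsGreatest (Set.range fun i => (x i)^2) M) :
    (∀ j, |1 - (1 - x j) * (1 + αt * x j)^2| ≤ (157 / Real.sqrt 3 - 84187/960) * M) ∧
    157 / Real.sqrt 3 - 84187/960 < 2.95 := by
  have h3 : Real.sqrt 3 ^ 2 = 3 := Real.sq_sqrt (by norm_num)
  have h3nn : (0:ℝ) ≤ Real.sqrt 3 := Real.sqrt_nonneg 3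
  have h3pos : (0:ℝ) < Real.sqrt 3 := Real.sqrt_pos.mpr (by norm_num)
  have hs3a : Real.sqrt 3 ≤ 17321/10000 := by nlinarith [h3, h3nn]
  have hs3b : (173204/100000 : ℝ) ≤ Real.sqrt 3 := by nlinarith [h3, h3nn]
  have hE1 : (29/10 : ℝ) ≤ 157 / Real.sqrt 3 - 84187/960 := by
    have h5 : (86971/960 : ℝ) ≤ 157 / Real.sqrt 3 := by
      rw [le_div_iff₀ h3pos]; nlinarith [hs3a]
    linarith
  have hE2 : 157 / Real.sqrt 3 - 84187/960 < 2.95 := by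
    have h5 : 157 / Real.sqrt 3 < 87019/960 := by
      rw [div_lt_iff₀ h3pos]; nlinarith [hs3b]
    norm_num
    linarith
  refine ⟨?_, hE2⟩
  intro j
  obtain ⟨hMmem, hMub⟩ := hM
  obtain ⟨i0, hi0⟩ := hMmem
  simp only at hi0
  have hub : ∀ i, (x i)^2 ≤ M := fun i => hMub (Set.mem_range_self i)
  have hM0 : 0 ≤ M := hi0 ▸ sq_nonneg (x i0)
  set s := Real.sqrt M with hsdef
  have hs2 : s^2 = M := Real.sq_sqrt hM0
  have hs0 : 0 ≤ s := Real.sqrt_nonneg M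
  have hM16 : M ≤ 1/16 := by
    have h6 := hx i0
    rw [Set.mem_Icc] at h6
    nlinarith [h6.1, h6.2, hi0]
  have hs4 : s ≤ 1/4 := by nlinarith [hs2, hs0]
  have hxs : ∀ i, -s ≤ x i ∧ x i ≤ s := by
    intro i
    have h7 : |x i| ≤ s := by
      rw [← Real.sqrt_sq_eq_abs]
      exact Real.sqrt_le_sqrt (hub i)
    exact abs_le.mp h7
  by_cases hMz : M = 0
  · have hxj : x j = 0 := by
      have h8 := hub j
      rw [hMz] at h8
      nlinarith [sq_nonneg (x j)]
    rw [hxj, hMz]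
    norm_num
  · have hMpos : 0 < M := lt_of_le_of_ne hM0 (Ne.symm hMz)
    have hspos : 0 < s := Real.sqrt_pos.mpr hMpos
    have hδ : αt - 1/2 ≤ s := by
      by_contra hcon
      push_neg at hcon
      have hmem2 : (1/2 + 3/20*s) ∈ Set.Icc (1/2:ℝ) 1 := by
        rw [Set.mem_Icc]; constructor <;> nlinarith
      have hkey : ∀ i ∈ Finset.univ,
          (119/50) * (1 - (1 - x i) * (1 + (1/2 + 3/20*s) * x i)^2)^2 + (1/100)*s^2*(x i)^2
            ≤ (1 - (1 - x i) * (1 + αt * x i)^2)^2 := by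
        intro i _
        exact aux_key (x i) s αt (hxs i).1 (hxs i).2 hs0 hs4 (by linarith) hαt.2
      have hsum := Finset.sum_le_sum hkey
      rw [Finset.sum_add_distrib] at hsum
      have hsum2 : (119/50) * (∑ i, (1 - (1 - x i) * (1 + (1/2 + 3/20*s) * x i)^2)^2)
          + (1/100)*s^2*(∑ i, (x i)^2)
          ≤ ∑ i, (1 - (1 - x i) * (1 + αt * x i)^2)^2 := by
        rw [Finset.mul_sum, Finset.mul_sum]
        exact hsum
      have hx2 : s^2 ≤ ∑ i, (x i)^2 := by
        have h9 : (x i0)^2 ≤ ∑ i, (x i)^2 :=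
          Finset.single_le_sum (fun i _ => sq_nonneg (x i)) (Finset.mem_univ i0)
        rw [hs2, ← hi0]
        exact h9
      have happ := happrox _ hmem2
      have hnn2 : (0:ℝ) ≤ ∑ i, (1 - (1 - x i) * (1 + (1/2 + 3/20*s) * x i)^2)^2 :=
        Finset.sum_nonneg fun i _ => sq_nonneg _
      have hγ' : γ ≤ 69/50 := by norm_num at hγ ⊢; linarith
      nlinarith [hsum2, hx2, happ, hnn2, pow_pos hspos 2,
        mul_pos (pow_pos hspos 2) (pow_pos hspos 2),
        mul_nonneg (sq_nonneg s) (sub_nonneg.mpr hx2)]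
    have hfin := aux_final (x j) s αt (hxs j).1 (hxs j).2 hs0 hs4 hαt.1 hδ
    have h10 : (29/10)*s^2 ≤ (157 / Real.sqrt 3 - 84187/960) * M := by
      rw [hs2]
      exact mul_le_mul_of_nonneg_right hE1 hM0
    linarith
end

section
/- Let A be an n×n real matrix with ‖A‖₂ ≤ 1 and A² symmetric, and let R₀ = I - A². If α₀, α₁, … ∈ [1/2, 1] and X₀ = A, X_{k+1} = X_k(I + α_k(I - X_k²)), R_k = I - X_k², then each R_k is symmetric and ‖R_{k+1}‖₂ ≤ max(‖R_k‖₂², 1/4) whenever ‖R_k‖₂ ≤ 1. -/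
/-- The spectral norm (ℓ2 operator norm) of a real square matrix. -/
noncomputable def specNorm {n : ℕ} (A : Matrix (Fin n) (Fin n) ℝ) : ℝ :=
  ‖Matrix.toEuclideanCLM (𝕜 := ℝ) A‖

open scoped Matrix.Norms.L2Operator
open Matrix

namespace PrismAux

variable {n : ℕ}

lemma specNorm_eq (M : Matrix (Fin n) (Fin n) ℝ) : specNorm M = ‖M‖ := rfl

lemma clm_apply (A : Matrix (Fin n) (Fin n) ℝ) (x : EuclideanSpace ℝ (Fin n)) (i : Fin n) :
    (Matrix.toEuclideanCLM (𝕜 := ℝ) A x) i = (A *ᵥ (fun j => x j)) i := by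
  have h := congrFun (Matrix.ofLp_toEuclideanCLM A x) i
  simpa [Matrix.toLin'_apply] using h

lemma norm_diagonal_le (d : Fin n → ℝ) {c : ℝ} (hc : 0 ≤ c) (h : ∀ i, |d i| ≤ c) :
    ‖(Matrix.diagonal d : Matrix (Fin n) (Fin n) ℝ)‖ ≤ c := by
  rw [Matrix.cstar_norm_def]
  refine ContinuousLinearMap.opNorm_le_bound _ hc fun x => ?_
  have hx : ∀ i, (Matrix.toEuclideanCLM (𝕜 := ℝ) (Matrix.diagonal d) x) i = d i * x i := by
    intro i; rw [clm_apply, Matrix.mulVec_diagonal]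
  rw [EuclideanSpace.norm_eq, EuclideanSpace.norm_eq]
  rw [← Real.sqrt_sq hc, ← Real.sqrt_mul (sq_nonneg c)]
  apply Real.sqrt_le_sqrt
  rw [Finset.mul_sum]
  apply Finset.sum_le_sum
  intro i _
  rw [hx i]
  have h1 : ‖d i * x i‖ ^ 2 = (d i)^2 * ‖x i‖^2 := by
    rw [norm_mul, mul_pow]; simp [sq_abs]
  rw [h1]
  have h2 : (d i)^2 ≤ c^2 := by
    have := h i
    nlinarith [abs_nonneg (d i), sq_abs (d i)]
  nlinarith [sq_nonneg ‖x i‖, norm_nonneg (x i)]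

lemma abs_le_norm_diagonal (d : Fin n → ℝ) (i : Fin n) :
    |d i| ≤ ‖(Matrix.diagonal d : Matrix (Fin n) (Fin n) ℝ)‖ := by
  rw [Matrix.cstar_norm_def]
  have hv : (Matrix.toEuclideanCLM (𝕜 := ℝ) (Matrix.diagonal d) (EuclideanSpace.single i 1))
      = EuclideanSpace.single i (d i) := by
    ext j
    rw [clm_apply, Matrix.mulVec_diagonal]
    by_cases hj : j = i <;> simp [EuclideanSpace.single_apply, hj]
  have h := (Matrix.toEuclideanCLM (𝕜 := ℝ) (Matrix.diagonal d)).le_opNorm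
    (EuclideanSpace.single i 1)
  rw [hv, EuclideanSpace.norm_single, EuclideanSpace.norm_single] at h
  rw [Real.norm_eq_abs, Real.norm_eq_abs, abs_one, mul_one] at h; exact h

lemma norm_one_le : ‖(1 : Matrix (Fin n) (Fin n) ℝ)‖ ≤ 1 := by
  rw [Matrix.cstar_norm_def, _root_.map_one]
  exact ContinuousLinearMap.norm_id_le

lemma norm_unitary_le {U : Matrix (Fin n) (Fin n) ℝ} (hU : U ∈ Matrix.unitaryGroup (Fin n) ℝ) :
    ‖U‖ ≤ 1 := by
  have h := CStarRing.norm_star_mul_self (x := U)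
  rw [(Matrix.mem_unitaryGroup_iff').mp hU] at h
  nlinarith [norm_nonneg U, norm_one_le (n := n)]

lemma norm_conj_eq {U M : Matrix (Fin n) (Fin n) ℝ} (hU : U ∈ Matrix.unitaryGroup (Fin n) ℝ) :
    ‖U * M * star U‖ = ‖M‖ := by
  have hU2 : star U * U = 1 := (Matrix.mem_unitaryGroup_iff').mp hU
  have hUn : ‖U‖ ≤ 1 := norm_unitary_le hU
  have hUsn : ‖star U‖ ≤ 1 := by
    show ‖Uᴴ‖ ≤ 1
    rw [Matrix.l2_opNorm_conjTranspose]; exact hUn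
  have key : ∀ (V W N : Matrix (Fin n) (Fin n) ℝ), ‖V‖ ≤ 1 → ‖W‖ ≤ 1 → ‖V * N * W‖ ≤ ‖N‖ := by
    intro V W N hV hW
    calc ‖V * N * W‖ ≤ ‖V * N‖ * ‖W‖ := norm_mul_le _ _
      _ ≤ ‖V * N‖ := mul_le_of_le_one_right (norm_nonneg _) hW
      _ ≤ ‖V‖ * ‖N‖ := norm_mul_le _ _
      _ ≤ ‖N‖ := mul_le_of_le_one_left (norm_nonneg _) hV
  refine le_antisymm (key _ _ _ hUn hUsn) ?_
  have hM : M = star U * (U * M * star U) * U := by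
    have h : star U * (U * M * star U) * U = (star U * U) * M * (star U * U) := by
      simp [mul_assoc]
    rw [h, hU2, one_mul, mul_one]
  nth_rewrite 1 [hM]
  exact key _ _ _ hUsn hUn

section conj

variable {U : Matrix (Fin n) (Fin n) ℝ}

lemma conj_one (hU : U ∈ Matrix.unitaryGroup (Fin n) ℝ) :
    U * (1 : Matrix (Fin n) (Fin n) ℝ) * star U = 1 := by
  rw [mul_one, (Matrix.mem_unitaryGroup_iff).mp hU]

lemma conj_mul (hU : U ∈ Matrix.unitaryGroup (Fin n) ℝ) (P Q : Matrix (Fin n) (Fin n) ℝ) :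
    (U * P * star U) * (U * Q * star U) = U * (P * Q) * star U := by
  have hU2 : star U * U = 1 := (Matrix.mem_unitaryGroup_iff').mp hU
  have h : star U * (U * (Q * star U)) = Q * star U := by
    rw [← mul_assoc, hU2, one_mul]
  simp only [mul_assoc, h]

lemma conj_sub (P Q : Matrix (Fin n) (Fin n) ℝ) :
    U * (P - Q) * star U = U * P * star U - U * Q * star U := by
  rw [mul_sub, sub_mul]

lemma conj_add (P Q : Matrix (Fin n) (Fin n) ℝ) :
    U * (P + Q) * star U = U * P * star U + U * Q * star U := by
  rw [mul_add, add_mul]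

lemma conj_smul (a : ℝ) (P : Matrix (Fin n) (Fin n) ℝ) :
    U * (a • P) * star U = a • (U * P * star U) := by
  rw [mul_smul_comm, smul_mul_assoc]

lemma conj_poly (hU : U ∈ Matrix.unitaryGroup (Fin n) ℝ) (a : ℝ) (D : Matrix (Fin n) (Fin n) ℝ) :
    1 - (1 - U * D * star U) * (1 + a • (U * D * star U))^2
      = U * (1 - (1 - D) * (1 + a • D)^2) * star U := by
  have h1 : (1 : Matrix (Fin n) (Fin n) ℝ) - U * D * star U = U * (1 - D) * star U := by
    rw [conj_sub, conj_one hU]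
  have h2 : (1 : Matrix (Fin n) (Fin n) ℝ) + a • (U * D * star U)
      = U * (1 + a • D) * star U := by
    rw [conj_add, conj_one hU, conj_smul]
  rw [h1, h2, pow_two, conj_mul hU, conj_mul hU, ← pow_two, conj_sub, conj_one hU]

end conj

lemma diag_poly (a : ℝ) (v : Fin n → ℝ) :
    1 - (1 - Matrix.diagonal v) * (1 + a • Matrix.diagonal v)^2
      = Matrix.diagonal (fun i => 1 - (1 - v i) * (1 + a * v i)^2) := by
  have h1 : (1 : Matrix (Fin n) (Fin n) ℝ) = Matrix.diagonal (fun _ => (1:ℝ)) :=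
    Matrix.diagonal_one.symm
  rw [h1, ← Matrix.diagonal_smul]
  simp only [Matrix.diagonal_add, Matrix.diagonal_sub, pow_two, Matrix.diagonal_mul_diagonal]
  congr 1

lemma step_eq (Xk : Matrix (Fin n) (Fin n) ℝ) (a : ℝ) :
    1 - (Xk * (1 + a • (1 - Xk^2)))^2
      = 1 - (1 - (1 - Xk^2)) * (1 + a • (1 - Xk^2))^2 := by
  have hc : Commute Xk (1 + a • (1 - Xk^2)) := by
    have h1 : Commute Xk (1 - Xk^2) :=
      (Commute.one_right Xk).sub_right ((Commute.refl Xk).pow_right 2)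
    exact (Commute.one_right Xk).add_right (h1.smul_right a)
  rw [hc.mul_pow]
  congr 1
  rw [sub_sub_cancel]

lemma symm_of_rep {U : Matrix (Fin n) (Fin n) ℝ} (hU : U ∈ Matrix.unitaryGroup (Fin n) ℝ)
    (v : Fin n → ℝ) : (U * Matrix.diagonal v * star U).IsSymm := by
  rw [Matrix.IsSymm, ← Matrix.conjTranspose_eq_transpose_of_trivial]
  rw [Matrix.conjTranspose_mul, Matrix.conjTranspose_mul]
  rw [← Matrix.star_eq_conjTranspose, star_star, Matrix.star_eq_conjTranspose,
    Matrix.diagonal_conjTranspose]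
  have hstar : star (v : Fin n → ℝ) = v := by
    funext i; simp
  rw [hstar, mul_assoc]

lemma hfun_lb {a x : ℝ} (ha1 : 1/2 ≤ a) (ha2 : a ≤ 1) (hx : -(1/5) ≤ x) :
    -(1/5) ≤ 1 - (1 - x) * (1 + a * x)^2 := by
  rcases le_or_gt x 1 with h | h
  · nlinarith [sq_nonneg (3*x - 1), sq_nonneg (1 - a), sq_nonneg (x*(1-a)), sq_nonneg (a*x + 1),
      mul_nonneg (sub_nonneg.2 h) (sq_nonneg (3*x-1)), sq_nonneg ((1-a)*(3*x-1)),
      mul_nonneg (mul_nonneg (sub_nonneg.2 ha1) (sub_nonneg.2 h)) (sq_nonneg x)]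
  · nlinarith [sq_nonneg (1 + a*x), mul_nonneg (le_of_lt (sub_pos.2 h)) (sq_nonneg (1 + a*x))]

lemma hfun_ub_low {a x : ℝ} (ha1 : 1/2 ≤ a) (ha2 : a ≤ 1) (hx : -(1/5) ≤ x) (hx2 : x ≤ 1/2) :
    1 - (1 - x) * (1 + a * x)^2 ≤ 1/4 := by
  nlinarith [sq_nonneg (x - 1/2), sq_nonneg (x + 1/5),
    mul_nonneg (sub_nonneg.2 ha1) (sub_nonneg.2 ha2),
    sq_nonneg (a - 1/2), sq_nonneg (a*x),
    mul_nonneg (by linarith : (0:ℝ) ≤ x + 1/5) (sub_nonneg.2 ha2),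
    mul_nonneg (sub_nonneg.2 hx2) (sub_nonneg.2 ha1),
    mul_nonneg (mul_nonneg (sub_nonneg.2 hx2) (sub_nonneg.2 hx2)) (sub_nonneg.2 ha1),
    mul_nonneg (mul_nonneg (by linarith : (0:ℝ) ≤ x + 1/5) (by linarith : (0:ℝ) ≤ x + 1/5))
      (sub_nonneg.2 ha2)]

lemma hfun_ub_high {a x : ℝ} (ha1 : 1/2 ≤ a) (ha2 : a ≤ 1) (hx : 1/2 ≤ x) (hx2 : x ≤ 1) :
    1 - (1 - x) * (1 + a * x)^2 ≤ x^2 := by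
  have key : x^2 - (1 - (1 - x) * (1 + a * x)^2) = (1 - x) * x * (a^2 * x + 2*a - 1) := by ring
  nlinarith [mul_nonneg (mul_nonneg (sub_nonneg.2 hx2) (by linarith : (0:ℝ) ≤ x))
    (by nlinarith : (0:ℝ) ≤ a^2 * x + 2*a - 1)]

/-- The scalar eigenvalue recursion. -/
noncomputable def muSeq (α : ℕ → ℝ) (d : Fin n → ℝ) : ℕ → Fin n → ℝ
  | 0 => d
  | (k+1) => fun i => 1 - (1 - muSeq α d k i) * (1 + α k * muSeq α d k i)^2

end PrismAux

open PrismAux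

theorem prism_ns_one_step (n : ℕ) (A : Matrix (Fin n) (Fin n) ℝ)
    (hA : specNorm A ≤ 1) (hsym : (A ^ 2).IsSymm)
    (α : ℕ → ℝ) (hα : ∀ k, α k ∈ Set.Icc (1/2 : ℝ) 1)
    (X : ℕ → Matrix (Fin n) (Fin n) ℝ) (hX0 : X 0 = A)
    (hXrec : ∀ k, X (k+1) = X k * (1 + α k • (1 - (X k) ^ 2))) :
    ∀ k, (1 - (X k) ^ 2).IsSymm ∧
      (specNorm (1 - (X k) ^ 2) ≤ 1 →
        specNorm (1 - (X (k+1)) ^ 2) ≤ max ((specNorm (1 - (X k) ^ 2)) ^ 2) (1/4)) := by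
  have hH0 : (1 - A ^ 2).IsHermitian := by
    rw [Matrix.IsHermitian, Matrix.conjTranspose_eq_transpose_of_trivial,
      Matrix.transpose_sub, Matrix.transpose_one, hsym]
  set U : Matrix (Fin n) (Fin n) ℝ := (hH0.eigenvectorUnitary : Matrix (Fin n) (Fin n) ℝ)
    with hUdef
  have hU : U ∈ Matrix.unitaryGroup (Fin n) ℝ := (hH0.eigenvectorUnitary).property
  set d : Fin n → ℝ := hH0.eigenvalues with hddef
  set μ : ℕ → Fin n → ℝ := muSeq α d with hμdef
  -- representation
  have hrep : ∀ k, 1 - (X k) ^ 2 = U * Matrix.diagonal (μ k) * star U := by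
    intro k
    induction k with
    | zero =>
      rw [hX0]
      have h := hH0.spectral_theorem
      have h2 : Matrix.diagonal ((RCLike.ofReal : ℝ → ℝ) ∘ hH0.eigenvalues)
          = Matrix.diagonal (μ 0) := by
        congr 1
      rw [h2] at h
      exact h
    | succ k ih =>
      rw [hXrec k, step_eq, ih, conj_poly hU, diag_poly]
      have : (fun i => 1 - (1 - μ k i) * (1 + α k * μ k i)^2) = μ (k+1) := by
        funext i
        simp [hμdef, muSeq]
      rw [this]
  have hnorm : ∀ k, specNorm (1 - (X k) ^ 2) = ‖Matrix.diagonal (μ k)‖ := by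
    intro k
    rw [specNorm_eq, hrep k, norm_conj_eq hU]
  -- lower bound invariant
  have hlow : ∀ k i, -(1/5) ≤ μ k i := by
    intro k
    induction k with
    | zero =>
      intro i
      have hA2 : specNorm (A ^ 2) ≤ 1 := by
        rw [specNorm_eq] at hA ⊢
        rw [pow_two]
        calc ‖A * A‖ ≤ ‖A‖ * ‖A‖ := norm_mul_le _ _
          _ ≤ 1 := by nlinarith [norm_nonneg A]
      have hdiag : (1 : Matrix (Fin n) (Fin n) ℝ) - Matrix.diagonal (μ 0)
          = Matrix.diagonal (fun i => 1 - μ 0 i) := by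
        rw [← Matrix.diagonal_one, Matrix.diagonal_sub]
      have hrepA2 : A ^ 2 = U * Matrix.diagonal (fun i => 1 - μ 0 i) * star U := by
        have h1 : A ^ 2 = 1 - (1 - A ^ 2) := by rw [sub_sub_cancel]
        have h0 : (1 : Matrix (Fin n) (Fin n) ℝ) - A ^ 2 = 1 - (X 0) ^ 2 := by rw [hX0]
        rw [h1, h0, hrep 0, ← hdiag, conj_sub, conj_one hU]
      have habs : |1 - μ 0 i| ≤ 1 := by
        have h2 := abs_le_norm_diagonal (fun i => 1 - μ 0 i) i
        have h3 : ‖Matrix.diagonal (fun i => 1 - μ 0 i)‖ = specNorm (A ^ 2) := by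
          rw [specNorm_eq, hrepA2, norm_conj_eq hU]
        rw [h3] at h2
        exact h2.trans hA2
      have := abs_le.mp habs
      linarith [this.2]
    | succ k ih =>
      intro i
      have h := hfun_lb (hα k).1 (hα k).2 (ih i)
      have hform : μ (k+1) i = 1 - (1 - μ k i) * (1 + α k * μ k i)^2 := by
        simp [hμdef, muSeq]
      rw [hform]
      exact h
  -- main
  intro k
  constructor
  · rw [hrep k]; exact symm_of_rep hU (μ k)
  · intro hle
    set c : ℝ := specNorm (1 - (X k) ^ 2) with hcdef
    have hc0 : 0 ≤ c := by rw [hcdef, specNorm_eq]; exact norm_nonneg _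
    have hbd : ∀ i, |μ k i| ≤ c := by
      intro i
      rw [hcdef, hnorm k]
      exact abs_le_norm_diagonal (μ k) i
    have hmax0 : (0:ℝ) ≤ max (c ^ 2) (1/4) := le_max_of_le_right (by norm_num)
    rw [hnorm (k+1)]
    refine norm_diagonal_le (μ (k+1)) hmax0 fun i => ?_
    have hform : μ (k+1) i = 1 - (1 - μ k i) * (1 + α k * μ k i)^2 := by
      simp [hμdef, muSeq]
    rw [hform, abs_le]
    have hxlow : -(1/5) ≤ μ k i := hlow k i
    have hxhigh : μ k i ≤ 1 := by
      have := (abs_le.mp ((hbd i).trans hle)).2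
      exact this
    constructor
    · have := hfun_lb (hα k).1 (hα k).2 hxlow
      have h14 : (1:ℝ)/4 ≤ max (c ^ 2) (1/4) := le_max_right _ _
      linarith
    · rcases le_or_gt (μ k i) (1/2) with hc2 | hc2
      · have := hfun_ub_low (hα k).1 (hα k).2 hxlow hc2
        exact this.trans (le_max_of_le_right (by norm_num))
      · have h1 := hfun_ub_high (hα k).1 (hα k).2 (le_of_lt hc2) hxhigh
        have h2 : (μ k i) ^ 2 ≤ c ^ 2 := by
          have := hbd i
          nlinarith [abs_nonneg (μ k i), sq_abs (μ k i)]
        exact h1.trans (h2.trans (le_max_left _ _))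
end

section
/- For a symmetric invertible matrix M and α ∈ ℝ, define M' = 2α(1-α)I + (1-α)²M + α²M⁻¹. Then ‖I - M'‖_F² is a degree-4 polynomial in α: m(α) = c₀ + c₁α + c₂α² + c₃α³ + c₄α⁴ with c₁ = tr(-4I + 8M - 4M²), c₂ = tr(10I - 14M + 6M² - 2M⁻¹), c₃ = tr(-12I + 12M - 4M² + 4M⁻¹), and c₄ = tr(6I - 4M + M² - 4M⁻¹ + M⁻²). -/
open Matrix

lemma sum_sq_eq_trace {n : ℕ} (A : Matrix (Fin n) (Fin n) ℝ) :
    ∑ i, ∑ j, (A i j) ^ 2 = (Aᵀ * A).trace := by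
  simp only [Matrix.trace, Matrix.diag, Matrix.mul_apply, Matrix.transpose_apply, sq]
  rw [Finset.sum_comm]

theorem db_newton_frobenius_poly (n : ℕ) (M : Matrix (Fin n) (Fin n) ℝ)
    (hsym : M.IsSymm) (hinv : IsUnit M) :
    ∃ c₀ : ℝ, ∀ α : ℝ,
      (∑ i, ∑ j, (((1 - ((2 * α * (1 - α)) • (1 : Matrix (Fin n) (Fin n) ℝ)
          + (1 - α)^2 • M + α^2 • M⁻¹) : Matrix (Fin n) (Fin n) ℝ)) i j) ^ 2) =
      c₀ + (Matrix.trace (-4 • (1 : Matrix (Fin n) (Fin n) ℝ) + 8 • M - 4 • M ^ 2)) * α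
        + (Matrix.trace (10 • (1 : Matrix (Fin n) (Fin n) ℝ) - 14 • M + 6 • M ^ 2
            - 2 • M⁻¹)) * α ^ 2
        + (Matrix.trace (-12 • (1 : Matrix (Fin n) (Fin n) ℝ) + 12 • M - 4 • M ^ 2
            + 4 • M⁻¹)) * α ^ 3
        + (Matrix.trace (6 • (1 : Matrix (Fin n) (Fin n) ℝ) - 4 • M + M ^ 2 - 4 • M⁻¹
            + M⁻¹ ^ 2)) * α ^ 4 := by
  have hdet : IsUnit M.det := (Matrix.isUnit_iff_isUnit_det M).mp hinv
  have hMN : M * M⁻¹ = 1 := Matrix.mul_nonsing_inv M hdet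
  have hNM : M⁻¹ * M = 1 := Matrix.nonsing_inv_mul M hdet
  have hNt : M⁻¹ᵀ = M⁻¹ := by rw [Matrix.transpose_nonsing_inv, hsym.eq]
  refine ⟨(1 : Matrix (Fin n) (Fin n) ℝ).trace - 2 * M.trace + (M * M).trace, ?_⟩
  intro α
  rw [sum_sq_eq_trace]
  simp only [Matrix.transpose_sub, Matrix.transpose_add, Matrix.transpose_smul,
    Matrix.transpose_one, hsym.eq, hNt, sub_mul, mul_sub, add_mul, mul_add,
    Matrix.smul_mul, Matrix.mul_smul, Matrix.one_mul, Matrix.mul_one, hMN, hNM,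
    Matrix.trace_sub, Matrix.trace_add, Matrix.trace_smul, smul_smul, smul_eq_mul,
    pow_two, Matrix.trace_neg, neg_smul]
  simp only [nsmul_eq_mul, zsmul_eq_mul, Int.cast_ofNat, Nat.cast_ofNat]
  ring
end
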